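/- arXiv:1107.3396 — 2 statements merged into one kernel-verified Lean document; each statement's English description precedes it below -/
import Mathlib

section
/- Let C, D, E be chain complexes of abelian groups indexed by the natural numbers, and let (f, g, h): C ⇒ D and (f', g', h'): D ⇒ E be reductions. Then the triple (f' ∘ f, g ∘ g', h + g ∘ h' ∘ f) is a reduction from C to E. -/
open CategoryTheory

/-- A *reduction* `ρ = (f, g, h)` between chain complexes of abelian groups `C` and `D`
indexed by the natural numbers: `f : C → D` and `g : D → C` are chain maps and
`h` is a homotopy operator `hₙ : Cₙ → Cₙ₊₁`, satisfying `f ∘ g = id_D`,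
`d_C ∘ h + h ∘ d_C = id_C − g ∘ f`, `f ∘ h = 0`, `h ∘ g = 0` and `h ∘ h = 0`.
(Composition is written in diagrammatic order `≫`.) -/
structure IsReduction (C D : ChainComplex AddCommGrpCat ℕ) (f : C ⟶ D) (g : D ⟶ C)
    (h : ∀ n, C.X n ⟶ C.X (n + 1)) : Prop where
  /-- `f ∘ g = id_D` -/
  fg : g ≫ f = 𝟙 D
  /-- `d_C ∘ h + h ∘ d_C = id_C − g ∘ f` in degree `0` (where `h₋₁ = 0`) -/
  homotopy_zero : h 0 ≫ C.d 1 0 = 𝟙 (C.X 0) - f.f 0 ≫ g.f 0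
  /-- `d_C ∘ h + h ∘ d_C = id_C − g ∘ f` in degree `n + 1` -/
  homotopy_succ : ∀ n, h (n + 1) ≫ C.d (n + 2) (n + 1) + C.d (n + 1) n ≫ h n =
    𝟙 (C.X (n + 1)) - f.f (n + 1) ≫ g.f (n + 1)
  /-- `f ∘ h = 0` -/
  fh : ∀ n, h n ≫ f.f (n + 1) = 0
  /-- `h ∘ g = 0` -/
  hg : ∀ n, g.f n ≫ h n = 0
  /-- `h ∘ h = 0` -/
  hh : ∀ n, h n ≫ h (n + 1) = 0

/-! Because `f` and `g` are chain maps, conjugating `h'` by them commutes with forming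
`d ∘ h' + h' ∘ d`, so `d(g h' f) + (g h' f)d = g (1 − g' f') f = g f − g g' f' f`; adding
`d h + h d = 1 − g f` gives the homotopy identity of the composite. The side conditions
reduce to those of the two reductions once every `f ∘ g` is cancelled to the identity. -/

namespace ChainComplex

open Preadditive

variable {V : Type*} [Category V] [Preadditive V] {C D : ChainComplex V ℕ}

lemma conj_homotopy_zero (f : C ⟶ D) (g : D ⟶ C) (k : ∀ n, D.X n ⟶ D.X (n + 1)) :
    (f.f 0 ≫ k 0 ≫ g.f 1) ≫ C.d 1 0 = f.f 0 ≫ (k 0 ≫ D.d 1 0) ≫ g.f 0 := by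
  simp only [Category.assoc, g.comm]

lemma conj_homotopy_succ (f : C ⟶ D) (g : D ⟶ C) (k : ∀ n, D.X n ⟶ D.X (n + 1)) (n : ℕ) :
    (f.f (n + 1) ≫ k (n + 1) ≫ g.f (n + 2)) ≫ C.d (n + 2) (n + 1) +
        C.d (n + 1) n ≫ f.f n ≫ k n ≫ g.f (n + 1) =
      f.f (n + 1) ≫ (k (n + 1) ≫ D.d (n + 2) (n + 1) + D.d (n + 1) n ≫ k n) ≫ g.f (n + 1) := by
  simp only [Category.assoc, g.comm, add_comp, comp_add, ← f.comm_assoc]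

end ChainComplex

namespace IsReduction

variable {C D : ChainComplex AddCommGrpCat ℕ} {f : C ⟶ D} {g : D ⟶ C}
  {h : ∀ n, C.X n ⟶ C.X (n + 1)}

lemma fg_f (ρ : IsReduction C D f g h) (n : ℕ) : g.f n ≫ f.f n = 𝟙 (D.X n) := by
  rw [← HomologicalComplex.comp_f, ρ.fg, HomologicalComplex.id_f]

lemma fg_f_assoc (ρ : IsReduction C D f g h) (n : ℕ) {Z : AddCommGrpCat} (φ : D.X n ⟶ Z) :
    g.f n ≫ f.f n ≫ φ = φ := by
  rw [← Category.assoc, ρ.fg_f, Category.id_comp]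

end IsReduction

open Preadditive Limits ChainComplex in
/-- If `(f, g, h) : C ⇒ D` and `(f', g', h') : D ⇒ E` are reductions, then the composite
triple `(f' ∘ f, g ∘ g', h + g ∘ h' ∘ f)` is a reduction from `C` to `E`. -/
theorem reduction_comp (C D E : ChainComplex AddCommGrpCat ℕ)
    (f : C ⟶ D) (g : D ⟶ C) (h : ∀ n, C.X n ⟶ C.X (n + 1))
    (f' : D ⟶ E) (g' : E ⟶ D) (h' : ∀ n, D.X n ⟶ D.X (n + 1))
    (ρ : IsReduction C D f g h) (ρ' : IsReduction D E f' g' h') :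
    IsReduction C E (f ≫ f') (g' ≫ g)
      (fun n => h n + f.f n ≫ h' n ≫ g.f (n + 1)) := by
  constructor
  case fg => rw [Category.assoc, reassoc_of% ρ.fg, ρ'.fg]
  case homotopy_zero =>
    rw [add_comp, conj_homotopy_zero, ρ.homotopy_zero, ρ'.homotopy_zero]
    simp only [sub_comp, comp_sub, Category.id_comp, HomologicalComplex.comp_f, Category.assoc]
    abel
  case homotopy_succ =>
    intro n
    rw [add_comp, comp_add, add_add_add_comm, conj_homotopy_succ, ρ.homotopy_succ,
      ρ'.homotopy_succ]
    simp only [sub_comp, comp_sub, Category.id_comp, HomologicalComplex.comp_f, Category.assoc]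
    abel
  case fh =>
    intro n
    simp only [HomologicalComplex.comp_f, add_comp, Category.assoc, reassoc_of% (ρ.fh n),
      ρ.fg_f_assoc, ρ'.fh, zero_comp, comp_zero, add_zero]
  case hg =>
    intro n
    simp only [HomologicalComplex.comp_f, comp_add, Category.assoc, ρ.hg, ρ.fg_f_assoc,
      reassoc_of% (ρ'.hg n), zero_comp, comp_zero, add_zero]
  case hh =>
    intro n
    simp only [add_comp, comp_add, Category.assoc, ρ.hh, reassoc_of% (ρ.fh n), ρ.hg,
      ρ.fg_f_assoc, reassoc_of% (ρ'.hh n), zero_comp, comp_zero, add_zero]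
end

section
/- Let E be a group, A a subgroup of the center of E, and π: E → G the quotient homomorphism onto G = E/A. Then there exists a 2-cocycle f: G × G → A (i.e., a map satisfying f(g,1) = 0 = f(1,g) and f(gh, k) + f(g, h) = f(h, k) + f(g, hk) for all g, h, k ∈ G) together with a group isomorphism φ: A ×_f G → E such that φ(a, 1) = a for all a ∈ A and π(φ(a, g)) = g for all (a, g); that is, every central extension of G by A is equivalent to one of the form 0 → A → A ×_f G → G → 1. -/
/-!
Fix a section `σ` of `E → E ⧸ A` with `σ 1 = 1`. Since `σ g * σ h` and `σ (g * h)` have the same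
image in `E ⧸ A`, `σ g * σ h = f g h * σ (g * h)` for a unique `f g h ∈ A`, and `(a, g) ↦ a * σ g`
is a bijection `A × (E ⧸ A) → E`. As `A` is central, this bijection carries the multiplication
twisted by `f` to that of `E`, and expanding `σ g * σ h * σ k` in both orders gives the cocycle
identity.
-/

theorem Subgroup.normal_of_le_center {E : Type*} [Group E] {A : Subgroup E}
    (hA : A ≤ Subgroup.center E) : A.Normal :=
  ⟨fun n hn g => by rwa [Subgroup.mem_center_iff.mp (hA hn) g, mul_inv_cancel_right]⟩

theorem Subgroup.commute_of_le_center {E : Type*} [Group E] {A : Subgroup E}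
    (hA : A ≤ Subgroup.center E) {a : E} (ha : a ∈ A) (x : E) : Commute a x :=
  (Subgroup.mem_center_iff.mp (hA ha) x).symm

namespace QuotientGroup

variable {E : Type*} [Group E] {A : Subgroup E} [A.Normal]

theorem exists_normalized_section :
    ∃ σ : E ⧸ A → E, (∀ g, (σ g : E ⧸ A) = g) ∧ σ 1 = 1 := by
  classical
  refine ⟨Function.update Quotient.out 1 1, fun g => ?_, Function.update_self ..⟩
  by_cases hg : g = 1 <;> simp [hg]

variable (σ : E ⧸ A → E)

def sectionProdMap (p : A × (E ⧸ A)) : E :=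
  p.1 * σ p.2

variable (hσ : ∀ g, (σ g : E ⧸ A) = g)

def sectionCocycle (g h : E ⧸ A) : A :=
  ⟨σ g * σ h * (σ (g * h))⁻¹, by
    rw [← QuotientGroup.eq_one_iff, mk_mul, mk_mul, mk_inv, hσ, hσ, hσ, mul_inv_cancel]⟩

@[simp]
theorem coe_sectionCocycle (g h : E ⧸ A) :
    (sectionCocycle σ hσ g h : E) = σ g * σ h * (σ (g * h))⁻¹ :=
  rfl

theorem section_mul_section (g h : E ⧸ A) :
    σ g * σ h = sectionCocycle σ hσ g h * σ (g * h) := by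
  simp

theorem sectionCocycle_one_right (hσ1 : σ 1 = 1) (g : E ⧸ A) : sectionCocycle σ hσ g 1 = 1 := by
  ext; simp [hσ1]

theorem sectionCocycle_one_left (hσ1 : σ 1 = 1) (g : E ⧸ A) : sectionCocycle σ hσ 1 g = 1 := by
  ext; simp [hσ1]

include hσ in
@[simp]
theorem mk_sectionProdMap (p : A × (E ⧸ A)) : ((sectionProdMap σ p : E) : E ⧸ A) = p.2 := by
  rw [sectionProdMap, mk_mul, (eq_one_iff _).mpr p.1.2, one_mul, hσ]

theorem sectionProdMap_one_right (hσ1 : σ 1 = 1) (a : A) : sectionProdMap σ (a, 1) = a := by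
  rw [sectionProdMap, hσ1, mul_one]

include hσ in
theorem sectionProdMap_injective : Function.Injective (sectionProdMap σ) := by
  rintro ⟨a, g⟩ ⟨b, h⟩ hab
  obtain rfl : g = h := by simpa only [mk_sectionProdMap σ hσ] using congrArg ((↑) : E → E ⧸ A) hab
  exact Prod.ext (Subtype.ext (mul_right_cancel hab)) rfl

include hσ in
theorem sectionProdMap_surjective : Function.Surjective (sectionProdMap σ) := fun e =>
  ⟨(⟨e * (σ e)⁻¹, by rw [← eq_one_iff, mk_mul, mk_inv, hσ, mul_inv_cancel]⟩, e),
    inv_mul_cancel_right e (σ e)⟩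

variable (hA : A ≤ Subgroup.center E)
include hA

theorem sectionCocycle_mul_mul (g h k : E ⧸ A) :
    sectionCocycle σ hσ (g * h) k * sectionCocycle σ hσ g h =
      sectionCocycle σ hσ h k * sectionCocycle σ hσ g (h * k) := by
  set c := sectionCocycle σ hσ
  have key : (c g h * c (g * h) k : E) * σ (g * h * k) =
      (c h k * c g (h * k) : E) * σ (g * h * k) :=
    calc (c g h * c (g * h) k : E) * σ (g * h * k)
        = c g h * (σ (g * h) * σ k) := by rw [section_mul_section σ hσ (g * h), mul_assoc]
      _ = σ g * (σ h * σ k) := by rw [← mul_assoc, ← section_mul_section, mul_assoc]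
      _ = c h k * (σ g * σ (h * k)) := by
        rw [section_mul_section σ hσ h, ← mul_assoc, ← mul_assoc,
          (Subgroup.commute_of_le_center hA (c h k).2 (σ g)).eq, mul_assoc]
      _ = (c h k * c g (h * k) : E) * σ (g * h * k) := by
        rw [section_mul_section σ hσ g, mul_assoc g, mul_assoc]
  ext
  rw [Subgroup.coe_mul, (Subgroup.commute_of_le_center hA (c _ _).2 _).eq]
  exact mul_right_cancel key

theorem sectionProdMap_mul (p q : A × (E ⧸ A)) :
    sectionProdMap σ (p.1 * q.1 * sectionCocycle σ hσ p.2 q.2, p.2 * q.2) =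
      sectionProdMap σ p * sectionProdMap σ q := by
  simp only [sectionProdMap, Subgroup.coe_mul, mul_assoc, ← section_mul_section σ hσ]
  rw [← mul_assoc (q.1 : E), (Subgroup.commute_of_le_center hA q.1.2 _).eq, mul_assoc]

end QuotientGroup

/-- Let `E` be a group, `A` a subgroup of the center of `E` and `π : E → G = E/A` the
quotient map.  Then there is a 2-cocycle `f : G × G → A` (written multiplicatively:
`f (g, 1) = 1 = f (1, g)` and `f (g·h, k) · f (g, h) = f (h, k) · f (g, h·k)`) together
with a group isomorphism `φ : A ×_f G ≃ E` — where `A ×_f G` is `A × G` with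
multiplication `(a₁, g₁)·(a₂, g₂) = (a₁·a₂·f (g₁, g₂), g₁·g₂)` — such that
`φ (a, 1) = a` and `π (φ (a, g)) = g`.  That is, every central extension of `G` by `A`
is equivalent to one of the form `0 → A → A ×_f G → G → 1`. -/
theorem central_extension_is_cocycle_extension (E : Type) [Group E] (A : Subgroup E)
    (hA : A ≤ Subgroup.center E) :
    haveI : A.Normal := ⟨fun n hn g => by
      have hgn : g * n * g⁻¹ = n := by
        rw [Subgroup.mem_center_iff.mp (hA hn) g, mul_assoc, mul_inv_cancel, mul_one]
      rw [hgn]; exact hn⟩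
    ∃ f : (E ⧸ A) → (E ⧸ A) → A,
      (∀ g : E ⧸ A, f g 1 = 1) ∧
      (∀ g : E ⧸ A, f 1 g = 1) ∧
      (∀ g h k : E ⧸ A, f (g * h) k * f g h = f h k * f g (h * k)) ∧
      ∃ φ : A × (E ⧸ A) → E,
        Function.Bijective φ ∧
        (∀ p q : A × (E ⧸ A),
          φ (p.1 * q.1 * f p.2 q.2, p.2 * q.2) = φ p * φ q) ∧
        (∀ a : A, φ (a, 1) = (a : E)) ∧
        (∀ p : A × (E ⧸ A), (QuotientGroup.mk (φ p) : E ⧸ A) = p.2) := by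
  have := Subgroup.normal_of_le_center hA
  obtain ⟨σ, hσ, hσ1⟩ := QuotientGroup.exists_normalized_section (A := A)
  open QuotientGroup in
  exact ⟨sectionCocycle σ hσ, sectionCocycle_one_right σ hσ hσ1, sectionCocycle_one_left σ hσ hσ1,
    sectionCocycle_mul_mul σ hσ hA, sectionProdMap σ,
    ⟨sectionProdMap_injective σ hσ, sectionProdMap_surjective σ hσ⟩, sectionProdMap_mul σ hσ hA,
    sectionProdMap_one_right σ hσ1, mk_sectionProdMap σ hσ⟩
end
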